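/- Let ξ be a complex non-real algebraic number of degree d, set K = ℚ(ξ), and let n be an integer with 2 ≤ n ≤ d-2. Suppose there exist effectively computable positive reals δ and X₀ such that for all integers x₀,...,xₙ with X = max{|x₀|,...,|xₙ|} ≥ X₀ one has |Norm_{K/ℚ}(x₀ + x₁ξ + ... + xₙξⁿ)| ≥ X^δ. Then there exist positive constants c and κ depending on ξ such that |ξ - α| > c·H(α)^{-d/2 + κ} for every algebraic number α of degree at most n. -/

import Mathlib

open IntermediateField

/-- The naïve height of an integer polynomial: the maximum of the absolute values
of its coefficients. -/
noncomputable def polyHeight (P : Polynomial ℤ) : ℕ :=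
  P.support.sup fun i => (P.coeff i).natAbs

/-- `P` is a minimal defining integer polynomial of the algebraic number `α`. -/
def IsMinIntPoly (α : ℂ) (P : Polynomial ℤ) : Prop :=
  Irreducible P ∧ Polynomial.aeval α P = 0

/-!
Let `P` be the minimal polynomial of `α`, of height `H`, and put `y = P(ξ) ∈ ℚ(ξ)`. The norm of
`y` is the product of the `P(σ ξ)` over the `d` complex embeddings `σ` of `ℚ(ξ)`. Every factor is
`O(H)`, and the two factors at `ξ` and at its complex conjugate `ξ̄` have the same absolute value
`|P(ξ) - P(α)| = O(H |ξ - α|)`. Hence `H^δ ≤ |N(y)| = O(H^d |ξ - α|²)`, which is the bound with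
`κ = δ/2` (for `δ ≤ 1`, say). The finitely many `α` of height below `X₀` stay at a positive distance from `ξ`, as `ξ`
has degree `d > n`.
-/

open Polynomial Module

lemma natAbs_coeff_le_polyHeight (P : ℤ[X]) (i : ℕ) : (P.coeff i).natAbs ≤ polyHeight P := by
  by_cases h : P.coeff i = 0
  · simp [h]
  · exact Finset.le_sup (f := fun i => (P.coeff i).natAbs) (mem_support_iff.2 h)

lemma norm_coeff_le_polyHeight (P : ℤ[X]) (i : ℕ) : ‖P.coeff i‖ ≤ polyHeight P := by
  rw [Int.norm_eq_abs, ← Int.cast_abs, ← Int.natCast_natAbs]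
  exact_mod_cast natAbs_coeff_le_polyHeight P i

lemma one_le_polyHeight {P : ℤ[X]} (hP : P ≠ 0) : 1 ≤ polyHeight P :=
  (Int.natAbs_pos.2 (leadingCoeff_ne_zero.2 hP)).trans_le (natAbs_coeff_le_polyHeight P _)

lemma sup_natAbs_coeff_eq_polyHeight {P : ℤ[X]} {n : ℕ} (hP : P.natDegree ≤ n) :
    (Finset.univ.sup fun i : Fin (n + 1) => (P.coeff i).natAbs) = polyHeight P := by
  refine le_antisymm (Finset.sup_le fun i _ => natAbs_coeff_le_polyHeight P i) ?_
  refine Finset.sup_le fun j hj => ?_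
  have hj : j < n + 1 := Nat.lt_succ_of_le ((le_natDegree_of_mem_supp j hj).trans hP)
  exact Finset.le_sup (f := fun i : Fin (n + 1) => (P.coeff i).natAbs) (Finset.mem_univ ⟨j, hj⟩)

lemma finite_setOf_aeval_eq_zero_of_polyHeight_le (n N : ℕ) :
    {z : ℂ | ∃ P : ℤ[X], P ≠ 0 ∧ P.natDegree ≤ n ∧ polyHeight P ≤ N ∧ aeval z P = 0}.Finite := by
  classical
  refine (bUnion_roots_finite (algebraMap ℤ ℂ) n (Set.finite_Icc (-(N : ℤ)) N)).subset ?_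
  rintro z ⟨P, hP0, hdeg, hH, hz⟩
  refine Set.mem_iUnion₂.2 ⟨P, ⟨hdeg, fun i => ?_⟩, ?_⟩
  · have := (natAbs_coeff_le_polyHeight P i).trans hH
    simp only [Set.mem_Icc]
    omega
  · rw [Finset.mem_coe, Multiset.mem_toFinset,
      mem_roots_map_of_injective (algebraMap ℤ ℂ).injective_int hP0, ← aeval_def, hz]

section Evaluation

variable {n : ℕ} {P : ℤ[X]} {A : Type*} [NormedCommRing A] [NormOneClass A]

lemma norm_sum_coeff_smul_le {E : Type*} [SeminormedAddCommGroup E]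
    {f : ℕ → E} {B : ℝ} (hf : ∀ i ≤ n, ‖f i‖ ≤ B) :
    ‖∑ i ∈ Finset.range (n + 1), P.coeff i • f i‖ ≤ (n + 1) * polyHeight P * B := by
  have hB : 0 ≤ B := (norm_nonneg _).trans (hf 0 n.zero_le)
  calc ‖∑ i ∈ Finset.range (n + 1), P.coeff i • f i‖
      ≤ ∑ i ∈ Finset.range (n + 1), ‖P.coeff i • f i‖ := norm_sum_le _ _
    _ ≤ ∑ _i ∈ Finset.range (n + 1), (polyHeight P * B : ℝ) := by
      refine Finset.sum_le_sum fun i hi => (norm_zsmul_le _ _).trans ?_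
      exact mul_le_mul (norm_coeff_le_polyHeight P i) (hf i (Nat.lt_succ_iff.1
        (Finset.mem_range.1 hi))) (norm_nonneg _) (by positivity)
    _ = (n + 1) * polyHeight P * B := by simp [mul_assoc]

lemma norm_pow_sub_pow_le (x y : A) (i : ℕ)
    {M : ℝ} (hx : ‖x‖ ≤ M) (hy : ‖y‖ ≤ M) :
    ‖x ^ i - y ^ i‖ ≤ i * M ^ (i - 1) * ‖x - y‖ := by
  rw [← geom_sum₂_mul]
  refine (norm_mul_le _ _).trans (mul_le_mul_of_nonneg_right ?_ (norm_nonneg _))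
  calc ‖∑ j ∈ Finset.range i, x ^ j * y ^ (i - 1 - j)‖
      ≤ ∑ j ∈ Finset.range i, ‖x ^ j * y ^ (i - 1 - j)‖ := norm_sum_le _ _
    _ ≤ ∑ j ∈ Finset.range i, M ^ (i - 1) := by
      refine Finset.sum_le_sum fun j hj => ?_
      have hM : 0 ≤ M := (norm_nonneg x).trans hx
      have hji : j + (i - 1 - j) = i - 1 := by have := Finset.mem_range.1 hj; omega
      calc ‖x ^ j * y ^ (i - 1 - j)‖ ≤ ‖x‖ ^ j * ‖y‖ ^ (i - 1 - j) :=
            (norm_mul_le _ _).trans (mul_le_mul (norm_pow_le _ _) (norm_pow_le _ _)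
              (norm_nonneg _) (by positivity))
        _ ≤ M ^ j * M ^ (i - 1 - j) := by gcongr
        _ = M ^ (i - 1) := by rw [← pow_add, hji]
    _ = i * M ^ (i - 1) := by simp

lemma norm_aeval_le (hP : P.natDegree ≤ n) (z : A) {M : ℝ} (hM : 1 ≤ M) (hz : ‖z‖ ≤ M) :
    ‖aeval z P‖ ≤ (n + 1) * polyHeight P * M ^ n := by
  rw [aeval_eq_sum_range' (Nat.lt_succ_of_le hP)]
  refine norm_sum_coeff_smul_le fun i hi => ?_
  exact (norm_pow_le z i).trans ((pow_le_pow_left₀ (norm_nonneg z) hz i).trans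
    (pow_le_pow_right₀ hM hi))

lemma norm_aeval_sub_aeval_le (hP : P.natDegree ≤ n) (x y : A) {M : ℝ} (hM : 1 ≤ M)
    (hx : ‖x‖ ≤ M) (hy : ‖y‖ ≤ M) :
    ‖aeval x P - aeval y P‖ ≤ (n + 1) * polyHeight P * ((n + 1) * M ^ n * ‖x - y‖) := by
  rw [aeval_eq_sum_range' (Nat.lt_succ_of_le hP), aeval_eq_sum_range' (Nat.lt_succ_of_le hP),
    ← Finset.sum_sub_distrib]
  simp_rw [← smul_sub]
  refine norm_sum_coeff_smul_le fun i hi => (norm_pow_sub_pow_le x y i hx hy).trans ?_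
  gcongr
  · exact_mod_cast hi.trans n.le_succ
  · omega

end Evaluation

lemma sum_fin_intCast_coeff_mul_pow_eq_aeval {A : Type*} [CommRing A] {P : ℤ[X]} {n : ℕ}
    (hP : P.natDegree ≤ n) (a : A) :
    ∑ i : Fin (n + 1), (P.coeff i : A) * a ^ (i : ℕ) = aeval a P := by
  rw [aeval_eq_sum_range' (Nat.lt_succ_of_le hP),
    ← Fin.sum_univ_eq_sum_range (fun i => P.coeff i • a ^ i)]
  simp only [zsmul_eq_mul]

lemma aeval_ne_zero_of_natDegree_lt_minpoly {A : Type*} [Ring A] [Algebra ℚ A] {x : A}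
    {P : ℤ[X]} (hP : P ≠ 0) (hdeg : P.natDegree < (minpoly ℚ x).natDegree) :
    aeval x P ≠ 0 := by
  intro hx
  have hPℚ : P.map (algebraMap ℤ ℚ) ≠ 0 :=
    (Polynomial.map_ne_zero_iff (algebraMap ℤ ℚ).injective_int).2 hP
  have hdvd := minpoly.dvd ℚ x (p := P.map (algebraMap ℤ ℚ)) (by rwa [aeval_map_algebraMap])
  have := natDegree_le_of_dvd hdvd hPℚ
  rw [natDegree_map_eq_of_injective (algebraMap ℤ ℚ).injective_int] at this
  omega

lemma exists_pos_forall_le_norm_sub {ξ : ℂ} {n : ℕ} (hn : n < (minpoly ℚ ξ).natDegree)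
    (N : ℕ) : ∃ ε > 0, ∀ (α : ℂ) (P : ℤ[X]), P ≠ 0 → P.natDegree ≤ n → polyHeight P ≤ N →
      aeval α P = 0 → ε ≤ ‖ξ - α‖ := by
  have hξ : ξ ∉ {z : ℂ | ∃ P : ℤ[X], P ≠ 0 ∧ P.natDegree ≤ n ∧ polyHeight P ≤ N ∧
      aeval z P = 0} := fun ⟨P, hP, hdeg, _, hroot⟩ =>
    aeval_ne_zero_of_natDegree_lt_minpoly hP (hdeg.trans_lt hn) hroot
  obtain ⟨ε, hε, hball⟩ := Metric.isOpen_iff.1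
    (finite_setOf_aeval_eq_zero_of_polyHeight_le n N).isClosed.isOpen_compl ξ hξ
  refine ⟨ε, hε, fun α P hP hdeg hH hα => not_lt.1 fun hdist => ?_⟩
  exact hball (by rwa [Metric.mem_ball, dist_eq_norm, norm_sub_rev]) ⟨P, hP, hdeg, hH, hα⟩

section Norm

variable {K : Type*} [Field K] [Algebra ℚ K] [FiniteDimensional ℚ K]

lemma abs_norm_eq_prod_norm_algHom (y : K) :
    |(Algebra.norm ℚ y : ℝ)| = ∏ σ : K →ₐ[ℚ] ℂ, ‖σ y‖ := by
  rw [← norm_prod, ← Algebra.norm_eq_prod_embeddings ℚ ℂ y, eq_ratCast,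
    ← Complex.ofReal_ratCast, Complex.norm_real, Real.norm_eq_abs]

lemma abs_norm_le_pow_finrank_mul_sq {σ₀ σ₁ : K →ₐ[ℚ] ℂ} (hne : σ₀ ≠ σ₁) {y : K}
    (hconj : ‖σ₁ y‖ = ‖σ₀ y‖) {B t : ℝ} (hB : ∀ σ : K →ₐ[ℚ] ℂ, ‖σ y‖ ≤ B)
    (ht : ‖σ₀ y‖ ≤ B * t) :
    |(Algebra.norm ℚ y : ℝ)| ≤ B ^ finrank ℚ K * t ^ 2 := by
  classical
  have hpair : ({σ₀, σ₁} : Finset (K →ₐ[ℚ] ℂ)) ⊆ Finset.univ := Finset.subset_univ _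
  have hcard : (Finset.univ \ {σ₀, σ₁}).card + 2 = finrank ℚ K := by
    rw [Finset.card_sdiff_of_subset hpair, Finset.card_univ, AlgHom.card, Finset.card_pair hne]
    have := Finset.card_le_univ ({σ₀, σ₁} : Finset (K →ₐ[ℚ] ℂ))
    rw [Finset.card_pair hne, AlgHom.card] at this
    omega
  have hB0 : 0 ≤ B := (norm_nonneg _).trans (hB σ₀)
  rw [abs_norm_eq_prod_norm_algHom, ← Finset.prod_sdiff hpair, Finset.prod_pair hne, hconj,
    ← hcard, pow_add]
  calc (∏ σ ∈ Finset.univ \ {σ₀, σ₁}, ‖σ y‖) * (‖σ₀ y‖ * ‖σ₀ y‖)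
      ≤ (∏ _σ ∈ Finset.univ \ {σ₀, σ₁}, B) * ((B * t) * (B * t)) := by
        gcongr with σ
        · exact hB σ
        · exact (norm_nonneg _).trans ht
    _ = B ^ (Finset.univ \ {σ₀, σ₁}).card * B ^ 2 * t ^ 2 := by
        rw [Finset.prod_const]; ring

end Norm

lemma exists_abs_norm_aeval_gen_le {ξ : ℂ} (hnr : ξ.im ≠ 0) (hξ : IsIntegral ℚ ξ) (n : ℕ) :
    ∃ C > (0 : ℝ), ∀ (α : ℂ) (P : ℤ[X]), P.natDegree ≤ n → aeval α P = 0 → ‖ξ - α‖ ≤ 1 →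
      |(Algebra.norm ℚ (aeval (AdjoinSimple.gen ℚ ξ) P) : ℝ)| ≤
        C * polyHeight P ^ finrank ℚ ℚ⟮ξ⟯ * ‖ξ - α‖ ^ 2 := by
  have := adjoin.finiteDimensional hξ
  set g := AdjoinSimple.gen ℚ ξ
  let σ₀ : ℚ⟮ξ⟯ →ₐ[ℚ] ℂ := val ℚ⟮ξ⟯
  let σ₁ : ℚ⟮ξ⟯ →ₐ[ℚ] ℂ := ((starRingEnd ℂ) : ℂ →+* ℂ).toRatAlgHom.comp σ₀
  have hσ₀ : σ₀ g = ξ := AdjoinSimple.coe_gen ℚ ξ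
  have hσ₁ (y : ℚ⟮ξ⟯) : σ₁ y = starRingEnd ℂ (σ₀ y) := rfl
  have hne : σ₀ ≠ σ₁ := fun h => hnr <| Complex.conj_eq_iff_im.1 <| by
    rw [← hσ₀, ← hσ₁, ← h]
  obtain ⟨M, hM⟩ := Finite.exists_le fun σ : ℚ⟮ξ⟯ →ₐ[ℚ] ℂ => ‖σ g‖ + 1
  have hM1 : 1 ≤ M := by linarith [hM σ₀, norm_nonneg (σ₀ g)]
  have hξM : ‖ξ‖ + 1 ≤ M := hσ₀ ▸ hM σ₀
  refine ⟨((n + 1) * ((n + 1) * M ^ n)) ^ finrank ℚ ℚ⟮ξ⟯, by positivity,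
    fun α P hP hα hdist => ?_⟩
  set B : ℝ := (n + 1) * polyHeight P * ((n + 1) * M ^ n)
  have hy (σ : ℚ⟮ξ⟯ →ₐ[ℚ] ℂ) : σ (aeval g P) = aeval (σ g) P :=
    (aeval_algHom_apply (σ.restrictScalars ℤ) g P).symm
  have hB (σ : ℚ⟮ξ⟯ →ₐ[ℚ] ℂ) : ‖σ (aeval g P)‖ ≤ B := by
    rw [hy]
    refine (norm_aeval_le hP (σ g) hM1 (by linarith [hM σ])).trans ?_
    have : M ^ n ≤ (n + 1) * M ^ n := le_mul_of_one_le_left (by positivity) (by linarith)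
    exact mul_le_mul_of_nonneg_left this (by positivity)
  have ht : ‖σ₀ (aeval g P)‖ ≤ B * ‖ξ - α‖ := by
    have hαM : ‖α‖ ≤ M := by
      linarith [norm_le_norm_add_norm_sub' α ξ, norm_sub_rev ξ α]
    rw [hy, hσ₀, ← sub_zero (aeval ξ P), ← hα, mul_assoc]
    exact norm_aeval_sub_aeval_le hP ξ α hM1 (by linarith) hαM
  calc _ ≤ B ^ finrank ℚ ℚ⟮ξ⟯ * ‖ξ - α‖ ^ 2 :=
        abs_norm_le_pow_finrank_mul_sq hne (by rw [hσ₁, Complex.norm_conj]) hB ht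
    _ = _ := by simp only [B]; rw [← mul_pow]; ring

lemma rpow_le_of_rpow_le_mul_pow_mul_sq {H C t δ : ℝ} {d : ℕ} (hH : 0 < H) (hC : 0 < C)
    (ht : 0 ≤ t) (h : H ^ δ ≤ C * H ^ d * t ^ 2) :
    C ^ (-(1 : ℝ) / 2) * H ^ ((δ - d) / 2) ≤ t := by
  rw [← pow_le_pow_iff_left₀ (by positivity) ht two_ne_zero]
  calc (C ^ (-(1 : ℝ) / 2) * H ^ ((δ - d) / 2)) ^ 2
      = C⁻¹ * (H ^ δ / H ^ d) := by
        rw [mul_pow, ← Real.rpow_mul_natCast hC.le, ← Real.rpow_mul_natCast hH.le,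
          show (δ - d) / 2 * ((2 : ℕ) : ℝ) = δ - d by push_cast; ring, Real.rpow_sub hH,
          Real.rpow_natCast, show -(1 : ℝ) / 2 * ((2 : ℕ) : ℝ) = -1 by push_cast; ring,
          Real.rpow_neg_one]
    _ ≤ t ^ 2 := by
        rw [← div_eq_inv_mul, div_div, div_le_iff₀ (by positivity)]
        linarith

lemma mul_rpow_lt_of_le_or_le {c ε H e t : ℝ} (hc : 0 < c) (hε : 0 < ε) (hH : 1 ≤ H)
    (he : e ≤ 0) (h : c * H ^ e ≤ t ∨ ε ≤ t) : min c ε / 2 * H ^ e < t := by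
  have hHe : 0 < H ^ e := Real.rpow_pos_of_pos (by linarith) e
  rcases h with h | h
  · calc min c ε / 2 * H ^ e < c * H ^ e := by
          gcongr
          exact (half_lt_self (by positivity)).trans_le (min_le_left _ _)
      _ ≤ t := h
  · calc min c ε / 2 * H ^ e ≤ min c ε / 2 :=
          mul_le_of_le_one_right (by positivity) (Real.rpow_le_one_of_one_le_of_nonpos hH he)
      _ < ε := (half_lt_self (by positivity)).trans_le (min_le_right _ _)
      _ ≤ t := h

theorem stmt5_general (ξ : ℂ) (hnr : ξ.im ≠ 0) (d n : ℕ) (hnd : n + 2 ≤ d)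
    (hdeg : (minpoly ℚ ξ).natDegree = d)
    (hnorm : ∃ δ > (0 : ℝ), ∃ X₀ > (0 : ℝ), ∀ x : Fin (n + 1) → ℤ,
      X₀ ≤ ((Finset.univ.sup fun i => (x i).natAbs : ℕ) : ℝ) →
      ((Finset.univ.sup fun i => (x i).natAbs : ℕ) : ℝ) ^ δ ≤
        ((|Algebra.norm ℚ (∑ i : Fin (n + 1),
          (x i : ℚ⟮ξ⟯) * (IntermediateField.AdjoinSimple.gen ℚ ξ) ^ (i : ℕ))| : ℚ) : ℝ)) :
    ∃ c > (0 : ℝ), ∃ κ > (0 : ℝ), ∀ (α : ℂ) (P : Polynomial ℤ), IsMinIntPoly α P →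
      P.natDegree ≤ n →
      c * (polyHeight P : ℝ) ^ (-(d : ℝ) / 2 + κ) < ‖ξ - α‖ := by
  obtain ⟨δ, hδ, X₀, -, hnorm⟩ := hnorm
  have hξ : IsIntegral ℚ ξ := not_not.1 fun h => by simp [minpoly.eq_zero h] at hdeg; omega
  obtain ⟨C, hC, hupper⟩ := exists_abs_norm_aeval_gen_le hnr hξ n
  obtain ⟨ε, hε, hsep⟩ := exists_pos_forall_le_norm_sub (by omega : n < (minpoly ℚ ξ).natDegree)
    ⌈X₀⌉₊
  -- shrinking `δ` makes the exponent `(δ' - d) / 2` nonpositive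
  set δ' := min δ 1
  refine ⟨min (C ^ (-(1 : ℝ) / 2)) (min ε 1) / 2, by positivity, δ' / 2, by positivity,
    fun α P ⟨hirr, hα⟩ hP => ?_⟩
  set H : ℝ := (polyHeight P : ℝ)
  have hH : 1 ≤ H := Nat.one_le_cast.2 (one_le_polyHeight hirr.ne_zero)
  rw [show -(d : ℝ) / 2 + δ' / 2 = (δ' - d) / 2 by ring]
  refine mul_rpow_lt_of_le_or_le (Real.rpow_pos_of_pos hC _) (lt_min hε one_pos) hH
    (by linarith [min_le_right δ 1, (Nat.one_le_cast.2 (by omega) : (1 : ℝ) ≤ d)]) ?_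
  by_cases hmain : X₀ ≤ H ∧ ‖ξ - α‖ ≤ 1
  · refine .inl (rpow_le_of_rpow_le_mul_pow_mul_sq (by positivity) hC (norm_nonneg _) ?_)
    calc H ^ δ' ≤ H ^ δ := Real.rpow_le_rpow_of_exponent_le hH (min_le_left _ _)
      _ ≤ |(Algebra.norm ℚ (aeval (AdjoinSimple.gen ℚ ξ) P) : ℝ)| := by
        have := hnorm (fun i => P.coeff i)
        rw [sup_natAbs_coeff_eq_polyHeight hP, sum_fin_intCast_coeff_mul_pow_eq_aeval hP,
          Rat.cast_abs] at this
        exact this hmain.1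
      _ ≤ C * H ^ d * ‖ξ - α‖ ^ 2 := by
        rw [← hdeg, ← adjoin.finrank hξ]
        exact hupper α P hP hα hmain.2
  · refine .inr ?_
    rcases not_and_or.1 hmain with hsmall | hdist
    · refine (min_le_left _ _).trans (hsep α P hirr.ne_zero hP ?_ hα)
      exact Nat.cast_le.1 ((not_le.1 hsmall).le.trans (Nat.le_ceil X₀))
    · exact (min_le_right _ _).trans (not_le.1 hdist).le

theorem stmt5 (ξ : ℂ) (hnr : ξ.im ≠ 0) (d n : ℕ) (hn2 : 2 ≤ n) (hnd : n + 2 ≤ d)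
    (hdeg : (minpoly ℚ ξ).natDegree = d)
    (hnorm : ∃ δ > (0 : ℝ), ∃ X₀ > (0 : ℝ), ∀ x : Fin (n + 1) → ℤ,
      X₀ ≤ ((Finset.univ.sup fun i => (x i).natAbs : ℕ) : ℝ) →
      ((Finset.univ.sup fun i => (x i).natAbs : ℕ) : ℝ) ^ δ ≤
        ((|Algebra.norm ℚ (∑ i : Fin (n + 1),
          (x i : ℚ⟮ξ⟯) * (IntermediateField.AdjoinSimple.gen ℚ ξ) ^ (i : ℕ))| : ℚ) : ℝ)) :
    ∃ c > (0 : ℝ), ∃ κ > (0 : ℝ), ∀ (α : ℂ) (P : Polynomial ℤ), IsMinIntPoly α P →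
      P.natDegree ≤ n →
      c * (polyHeight P : ℝ) ^ (-(d : ℝ) / 2 + κ) < ‖ξ - α‖ :=
  stmt5_general ξ hnr d n hnd hdeg hnorm
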